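/- arXiv:2212.00506 — 3 statements merged into one kernel-verified Lean document; each statement's English description precedes it below -/
import Mathlib

section
/- Soundness of the fairness compilation at the level of execution semantics: if an action a' extends an action a by adding extra preconditions P and extra effects only on propositions disjoint from the original proposition vocabulary, then for any state s over the extended vocabulary whose restriction to the original vocabulary is s₀, if a' is applicable in s, then a is applicable in s₀ and the restriction of γ(s, a') to the original vocabulary equals γ(s₀, a). -/
/-- Soundness of the fairness compilation at the level of a single action execution.
If action `a'` extends action `a` (whose components live in the original vocabulary
`F₀`) with extra preconditions `P` and extra add/delete effects `A₁`, `D₁` over the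
disjoint auxiliary vocabulary `F₁`, then for any extended state `s`: if `a'` is
applicable in `s`, then `a` is applicable in the restriction `s ∩ F₀`, and the
restriction to `F₀` of the result of executing `a'` in `s` equals the result of
executing `a` in `s ∩ F₀`. -/
theorem compilation_sound_step {α : Type*} (F₀ F₁ : Set α) (hdisj : Disjoint F₀ F₁)
    (pre add del : Set α) (hpre : pre ⊆ F₀) (hadd : add ⊆ F₀) (hdel : del ⊆ F₀)
    (P A₁ D₁ : Set α) (hP : P ⊆ F₁) (hA₁ : A₁ ⊆ F₁) (hD₁ : D₁ ⊆ F₁)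
    (s : Set α) (happ : pre ∪ P ⊆ s) :
    pre ⊆ s ∩ F₀ ∧
    ((s \ (del ∪ D₁)) ∪ (add ∪ A₁)) ∩ F₀ = ((s ∩ F₀) \ del) ∪ add := by
  constructor
  · exact fun x hx => ⟨happ (Or.inl hx), hpre hx⟩
  · ext x
    simp only [Set.mem_inter_iff, Set.mem_union, Set.mem_diff]
    constructor
    · rintro ⟨h, hF⟩
      rcases h with ⟨hs, hnd⟩ | (ha | hA)
      · exact Or.inl ⟨⟨hs, hF⟩, fun hd => hnd (Or.inl hd)⟩
      · exact Or.inr ha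
      · exact absurd (hdisj.le_bot ⟨hF, hA₁ hA⟩) (Set.notMem_empty x)
    · rintro (⟨⟨hs, hF⟩, hnd⟩ | ha)
      · exact ⟨Or.inl ⟨hs, fun h => h.elim hnd (fun hD => hdisj.le_bot ⟨hF, hD₁ hD⟩)⟩, hF⟩
      · exact ⟨Or.inr (Or.inl ha), hadd ha⟩
end

section
/- Soundness of the compilation lifted to plans: under the action-extension setup, if a plan π' of extended actions executed from an extended initial state I' (whose restriction to the original vocabulary is I) reaches a state whose restriction contains the original goal set G ⊆ F₀, and every extended action in π' is applicable at its point of execution, then the plan π of corresponding original actions executed from I also reaches a state containing G. -/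
open Classical

/-- A STRIPS action: preconditions, add effects, delete effects. -/
structure PAct (α : Type*) where
  pre : Set α
  add : Set α
  del : Set α

/-- Single-step execution γ: apply the action if its preconditions hold, else no-op. -/
noncomputable def gamma {α : Type*} (s : Set α) (a : PAct α) : Set α :=
  if a.pre ⊆ s then (s \ a.del) ∪ a.add else s

/-- Plan execution Γ. -/
noncomputable def Gamma {α : Type*} (s : Set α) : List (PAct α) → Set α
  | [] => s
  | a :: π => Gamma (gamma s a) π

/-- The original action corresponding to an extended action: restrict all components
to the original vocabulary `F₀`. -/
def restrict {α : Type*} (F₀ : Set α) (a : PAct α) : PAct α :=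
  ⟨a.pre ∩ F₀, a.add ∩ F₀, a.del ∩ F₀⟩

theorem restrict_comm {α : Type*} (F₀ : Set α) :
    ∀ (π' : List (PAct α)) (s : Set α),
    (∀ k, (h : k < π'.length) → (π'.get ⟨k, h⟩).pre ⊆ Gamma s (π'.take k)) →
    Gamma s π' ∩ F₀ = Gamma (s ∩ F₀) (π'.map (restrict F₀))
  | [], s, _ => rfl
  | a :: π', s, happ => by
    have hpre : a.pre ⊆ s := happ 0 (Nat.succ_pos _)
    have hstep : gamma s a ∩ F₀ = gamma (s ∩ F₀) (restrict F₀ a) := by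
      unfold gamma restrict
      rw [if_pos hpre, if_pos (by exact fun x hx => ⟨hpre hx.1, hx.2⟩)]
      ext x
      simp only [Set.mem_inter_iff, Set.mem_union, Set.mem_diff]
      tauto
    have ih := restrict_comm F₀ π' (gamma s a) (fun k h => happ (k+1) (by simpa using Nat.succ_lt_succ h))
    simp only [List.map_cons, Gamma, hstep] at *
    exact ih

/-- Soundness of the compilation lifted to plans: if a plan `π'` of extended actions
(whose components live in `F₀ ∪ F₁`, with `F₀`, `F₁` disjoint), executed from an
extended state `I'` restricting to `I`, is fully applicable and reaches a state whose
restriction to `F₀` contains the goals `G ⊆ F₀`, then the corresponding plan of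
original (restricted) actions executed from `I` also reaches a state containing `G`. -/
theorem compilation_sound_plan {α : Type*} (F₀ F₁ : Set α) (hdisj : Disjoint F₀ F₁)
    (π' : List (PAct α))
    (hvoc : ∀ a ∈ π', a.pre ⊆ F₀ ∪ F₁ ∧ a.add ⊆ F₀ ∪ F₁ ∧ a.del ⊆ F₀ ∪ F₁)
    (I' I : Set α) (hI : I' ∩ F₀ = I)
    (happ : ∀ k, (h : k < π'.length) → (π'.get ⟨k, h⟩).pre ⊆ Gamma I' (π'.take k))
    (G : Set α) (hG : G ⊆ F₀) (hgoal : G ⊆ Gamma I' π' ∩ F₀) :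
    G ⊆ Gamma I (π'.map (restrict F₀)) := by
  have := restrict_comm F₀ π' I' happ
  rw [this, hI] at hgoal
  exact hgoal
end

section
/- The labeled fair MAP task (pre-assignment compilation) is not complete in general: there exists a solvable MAP task and a goal-to-agent assignment (optimal for Goal Maximin under the counting objective alone) such that no plan achieves each goal by its assigned agent, even though the unlabeled task has a solution. -/
/-- The number of (black) goals assigned to agent `i` by assignment `f`. -/
def load (f : Fin 3 → Fin 3) (i : Fin 3) : ℕ :=
  (Finset.univ.filter fun g => f g = i).card

/-- An assignment of the 3 black goals to the 3 agents is realizable by a plan iff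
there is an allocation of the 2 hammers to agents under which every achieving agent
holds a hammer. -/
def Realizable (f : Fin 3 → Fin 3) : Prop :=
  ∃ h : Fin 2 → Fin 3, ∀ g : Fin 3, ∃ k : Fin 2, h k = f g

/-- The labeled fair MAP task is not complete in general (simplified warehouse: 3
agents, 2 hammers, 3 black goals each requiring a hammer): the unlabeled task is
solvable; any realizable assignment uses at most 2 distinct agents; an injective
(Maximin-optimal) assignment exists and any injective assignment is Maximin-optimal;
yet no injective assignment is realizable. -/
theorem labeled_compilation_incomplete :
    (∃ f : Fin 3 → Fin 3, Realizable f) ∧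
    (∀ f : Fin 3 → Fin 3, Realizable f → (Finset.univ.image f).card ≤ 2) ∧
    (∃ f : Fin 3 → Fin 3, Function.Injective f) ∧
    (∀ f : Fin 3 → Fin 3, Function.Injective f →
      ((∀ f' : Fin 3 → Fin 3,
          Finset.univ.inf' Finset.univ_nonempty (load f') ≤
            Finset.univ.inf' Finset.univ_nonempty (load f)) ∧
        ¬ Realizable f)) := by
  unfold Realizable load Function.Injective
  decide
end
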